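/- The predictor w** = (1/(‖μ‖₂·√(1+γ²)))·[μ, −γμ, 0_d] ∈ ℝ^{3d} satisfies Acc_{P_{c2}}(w**) = 0.5·erfc(−ρ1·√(1 + γ)). -/

import Mathlib

open MeasureTheory ProbabilityTheory Real Filter
open scoped ENNReal NNReal

noncomputable section

/-- Complementary error function `erfc x = (2/√π) ∫_x^∞ e^{−t²} dt`. -/
def erfc (x : ℝ) : ℝ := 2 / Real.sqrt Real.pi * ∫ t in Set.Ioi x, Real.exp (-t ^ 2)

/-- A vector in `ℝ^d`. -/
abbrev Vec (d : ℕ) := Fin d → ℝ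

/-- The input space `ℝ^{3d}`, viewed as three blocks `x = [x1, x2, x3]`. -/
abbrev Inp (d : ℕ) := Vec d × Vec d × Vec d

/-- Euclidean dot product on `ℝ^d`. -/
def dot {d : ℕ} (v w : Vec d) : ℝ := ∑ i, v i * w i

/-- Euclidean norm on `ℝ^d`. -/
def vnorm {d : ℕ} (v : Vec d) : ℝ := Real.sqrt (∑ i, v i ^ 2)

/-- Euclidean norm on the full input space `ℝ^{3d}`. -/
def xnorm {d : ℕ} (x : Inp d) : ℝ :=
  Real.sqrt ((∑ i, x.1 i ^ 2) + (∑ i, x.2.1 i ^ 2) + ∑ i, x.2.2 i ^ 2)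

/-- Value `wᵀx` of the linear predictor `w` at input `x`. -/
def pred {d : ℕ} (w x : Inp d) : ℝ := dot w.1 x.1 + dot w.2.1 x.2.1 + dot w.2.2 x.2.2

/-- Isotropic Gaussian `N(m, v·I_d)` on `ℝ^d` (product of coordinate Gaussians). -/
def gaussVec (d : ℕ) (m : Vec d) (v : ℝ) : Measure (Vec d) :=
  Measure.pi fun i => gaussianReal (m i) (Real.toNNReal v)

/-- Conditional law of `x` given the label `y` in context `c1`:
`x1 ~ N(μy, σ²I)`, `x2 ~ N(μy, γσ²I)`, `x3 ~ N(μ, η²I)`, independent blocks. -/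
def condX1 (d : ℕ) (μ : Vec d) (σ γ η : ℝ) (y : ℝ) : Measure (Inp d) :=
  (gaussVec d (fun i => μ i * y) (σ ^ 2)).prod
    ((gaussVec d (fun i => μ i * y) (γ * σ ^ 2)).prod
      (gaussVec d μ (η ^ 2)))

/-- Conditional law of `x` given the label `y` in context `c2`:
`x1 ~ N(μy, σ²I)`, `x2 ~ N(−μy, (σ²/γ)I)`, `x3 ~ N(−μ, η²I)`, independent blocks. -/
def condX2 (d : ℕ) (μ : Vec d) (σ γ η : ℝ) (y : ℝ) : Measure (Inp d) :=
  (gaussVec d (fun i => μ i * y) (σ ^ 2)).prod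
    ((gaussVec d (fun i => -μ i * y) (σ ^ 2 / γ)).prod
      (gaussVec d (fun i => -μ i) (η ^ 2)))

/-- Joint law of `(x, y)`: `y` uniform on `{−1, 1}`, then `x ~ cond y`. -/
def jointOf {d : ℕ} (cond : ℝ → Measure (Inp d)) : Measure (Inp d × ℝ) :=
  (2 : ℝ≥0∞)⁻¹ • (cond 1).prod (Measure.dirac (1 : ℝ))
    + (2 : ℝ≥0∞)⁻¹ • (cond (-1)).prod (Measure.dirac (-1 : ℝ))

/-- The context-`c1` distribution over `(x, y)`. -/
def Pc1 (d : ℕ) (μ : Vec d) (σ γ η : ℝ) : Measure (Inp d × ℝ) :=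
  jointOf (condX1 d μ σ γ η)

/-- The context-`c2` distribution over `(x, y)`. -/
def Pc2 (d : ℕ) (μ : Vec d) (σ γ η : ℝ) : Measure (Inp d × ℝ) :=
  jointOf (condX2 d μ σ γ η)

/-- Accuracy `Acc_P(w) = P(sign(wᵀx) = y)` of linear predictor `w` under joint law `P`. -/
def AccP {d : ℕ} (P : Measure (Inp d × ℝ)) (w : Inp d) : ℝ :=
  (P {p | Real.sign (pred w p.1) = p.2}).toReal

/-- Norm-bounded linear predictors `W1 = {w ∈ ℝ^{3d} : ‖w‖₂ ≤ 1}`. -/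
def W1 (d : ℕ) : Set (Inp d) := {w | xnorm w ≤ 1}

/-- Population exponential loss `E_P[exp(−y·wᵀx)]`. -/
def expLoss {d : ℕ} (P : Measure (Inp d × ℝ)) (w : Inp d) : ℝ :=
  ∫ p, Real.exp (-(p.2 * pred w p.1)) ∂P

end

/-!
Rescaling by a positive constant does not change signs, so it suffices to treat
`w = (μ, -γμ, 0)`. Given `y`, the score `wᵀx` is a sum of independent Gaussians, hence Gaussian
with mean `y (1 + γ) ‖μ‖²` and variance `σ² (1 + γ) ‖μ‖²`. By the symmetry `y ↦ -y` both labels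
are predicted correctly with the same probability `P(N(m, v) > 0) = ½ erfc (-m / √(2v))`.
-/

open Set

namespace Real

lemma sign_eq_one_iff {r : ℝ} : sign r = 1 ↔ 0 < r := by
  rcases lt_trichotomy r 0 with h | rfl | h <;> grind [sign_of_neg, sign_of_pos, sign_zero]

lemma sign_eq_neg_one_iff {r : ℝ} : sign r = -1 ↔ r < 0 := by
  rcases lt_trichotomy r 0 with h | rfl | h <;> grind [sign_of_neg, sign_of_pos, sign_zero]

lemma sign_mul_of_pos {c : ℝ} (hc : 0 < c) (r : ℝ) : sign (c * r) = sign r := by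
  rcases lt_trichotomy r 0 with h | rfl | h
  · rw [sign_of_neg h, sign_of_neg (mul_neg_of_pos_of_neg hc h)]
  · rw [mul_zero]
  · rw [sign_of_pos h, sign_of_pos (mul_pos hc h)]

end Real

section Gaussian

lemma pi_gaussianReal_map_sum_mul {ι : Type*} [Fintype ι] (a m : ι → ℝ) (v : ι → ℝ≥0) :
    (Measure.pi fun i => gaussianReal (m i) (v i)).map (fun x => ∑ i, a i * x i)
      = gaussianReal (∑ i, a i * m i) (∑ i, .mk (a i ^ 2) (sq_nonneg _) * v i) := by
  have hscale : (Measure.pi fun i => gaussianReal (m i) (v i)).map (fun x i => a i * x i)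
      = Measure.pi fun i => gaussianReal (a i * m i) (.mk (a i ^ 2) (sq_nonneg _) * v i) := by
    rw [Measure.pi_map_pi fun i => (measurable_const_mul (a i)).aemeasurable]
    simp_rw [gaussianReal_map_const_mul]
  rw [show (fun x : ι → ℝ => ∑ i, a i * x i) = (fun y => ∑ i, y i) ∘ (fun x i => a i * x i)
      from rfl, ← Measure.map_map (by fun_prop) (by fun_prop), hscale]
  refine Measure.ext_of_charFun ?_
  ext t
  rw [charFun_map_sum_pi_eq_prod, Finset.prod_apply]
  simp only [charFun_gaussianReal, ← Complex.exp_sum]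
  congr 1
  push_cast
  simp only [Finset.sum_sub_distrib, Finset.mul_sum, Finset.sum_mul, Finset.sum_div]

lemma MeasureTheory.Measure.map_prod_add_eq_conv {α β : Type*} [MeasurableSpace α]
    [MeasurableSpace β] (μ : Measure α) (ν : Measure β) [SFinite μ] [SFinite ν]
    {f : α → ℝ} {g : β → ℝ} (hf : Measurable f) (hg : Measurable g) :
    (μ.prod ν).map (fun p => f p.1 + g p.2) = μ.map f ∗ ν.map g := by
  rw [Measure.conv, Measure.map_prod_map _ _ hf hg,
    Measure.map_map measurable_add (hf.prodMap hg)]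
  rfl

lemma gaussianReal_neg_Iio_zero (m : ℝ) (v : ℝ≥0) :
    gaussianReal (-m) v (Iio 0) = gaussianReal m v (Ioi 0) := by
  rw [← gaussianReal_map_neg, Measure.map_apply measurable_neg measurableSet_Iio]
  congr 1
  ext x
  simp

lemma toReal_gaussianReal_Ioi_zero (m : ℝ) {v : ℝ≥0} (hv : v ≠ 0) :
    (gaussianReal m v (Ioi 0)).toReal = 2⁻¹ * erfc (-(m / √(2 * v))) := by
  have hv' : (0 : ℝ) < v := by positivity
  set s := √(2 * v) with hs_def
  have hs : 0 < s := by positivity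
  have hcentre : gaussianReal m v (Ioi 0) = gaussianReal 0 v (Ioi (-m)) := by
    rw [← zero_add m, ← gaussianReal_map_add_const, Measure.map_apply (measurable_add_const m)
      measurableSet_Ioi, zero_add, preimage_add_const_Ioi, zero_sub]
  -- `s = √(2v)` is the scale that turns the Gaussian density into `exp (-t²)`
  have hpdf : ∀ x, gaussianPDFReal 0 v x = (√(2 * π * v))⁻¹ * rexp (-(s⁻¹ * x) ^ 2) := by
    intro x
    rw [gaussianPDFReal, mul_pow, inv_pow, hs_def, sq_sqrt (by positivity), sub_zero]
    ring_nf
  have hconst : (√(2 * π * v))⁻¹ * s = (√π)⁻¹ := by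
    rw [hs_def, show 2 * π * v = π * (2 * v) by ring, sqrt_mul pi_pos.le]
    field_simp
  rw [hcentre, gaussianReal_apply_eq_integral 0 hv, ENNReal.toReal_ofReal
      (setIntegral_nonneg measurableSet_Ioi fun x _ => gaussianPDFReal_nonneg _ _ _),
    setIntegral_congr_fun measurableSet_Ioi fun x _ => hpdf x, integral_const_mul,
    integral_comp_mul_left_Ioi (fun t => rexp (-t ^ 2)) _ (inv_pos.mpr hs), smul_eq_mul,
    inv_inv, ← mul_assoc, hconst, erfc, mul_neg, inv_mul_eq_div, div_eq_inv_mul m s]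
  ring

end Gaussian

section Model

variable {d : ℕ}

instance (m : Vec d) (v : ℝ) : IsProbabilityMeasure (gaussVec d m v) := by
  unfold gaussVec; infer_instance

lemma measurable_dot (a : Vec d) : Measurable (dot a) := by
  unfold dot; fun_prop

lemma map_gaussVec_dot (a m : Vec d) (v : ℝ) :
    (gaussVec d m v).map (dot a)
      = gaussianReal (dot a m) (∑ i, .mk (a i ^ 2) (sq_nonneg _) * v.toNNReal) :=
  pi_gaussianReal_map_sum_mul a m _

lemma map_pred_prod_gaussVec (w : Inp d) (m₁ m₂ m₃ : Vec d) (v₁ v₂ v₃ : ℝ) :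
    ((gaussVec d m₁ v₁).prod ((gaussVec d m₂ v₂).prod (gaussVec d m₃ v₃))).map (pred w)
      = gaussianReal (pred w (m₁, m₂, m₃))
          (∑ i, .mk (w.1 i ^ 2) (sq_nonneg _) * v₁.toNNReal
            + (∑ i, .mk (w.2.1 i ^ 2) (sq_nonneg _) * v₂.toNNReal
              + ∑ i, .mk (w.2.2 i ^ 2) (sq_nonneg _) * v₃.toNNReal)) := by
  have hpred : pred w = fun x => dot w.1 x.1 + (dot w.2.1 x.2.1 + dot w.2.2 x.2.2) := by
    ext x; simp only [pred, add_assoc]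
  rw [hpred, Measure.map_prod_add_eq_conv (gaussVec d m₁ v₁)
      ((gaussVec d m₂ v₂).prod (gaussVec d m₃ v₃)) (measurable_dot w.1)
      (g := fun x : Vec d × Vec d => dot w.2.1 x.1 + dot w.2.2 x.2) (by unfold dot; fun_prop),
    Measure.map_prod_add_eq_conv _ _ (measurable_dot _) (measurable_dot _)]
  simp only [map_gaussVec_dot, gaussianReal_conv_gaussianReal]

instance (μ : Vec d) (σ γ η y : ℝ) : IsProbabilityMeasure (condX2 d μ σ γ η y) := by
  unfold condX2; infer_instance

lemma measurable_pred (w : Inp d) : Measurable (pred w) := by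
  unfold pred dot; fun_prop

lemma pred_smul (c : ℝ) (w x : Inp d) : pred (c • w) x = c * pred w x := by
  simp only [pred, dot, Prod.smul_fst, Prod.smul_snd, Pi.smul_apply, smul_eq_mul, mul_add,
    Finset.mul_sum, mul_assoc]

lemma vnorm_pos {v : Vec d} (hv : v ≠ 0) : 0 < vnorm v := by
  obtain ⟨i, hi⟩ := Function.ne_iff.mp hv
  exact sqrt_pos.mpr <| Finset.sum_pos' (fun j _ => sq_nonneg (v j))
    ⟨i, Finset.mem_univ i, sq_pos_of_ne_zero hi⟩

lemma AccP_smul_of_pos (P : Measure (Inp d × ℝ)) {c : ℝ} (hc : 0 < c) (w : Inp d) :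
    AccP P (c • w) = AccP P w := by
  simp only [AccP, pred_smul, Real.sign_mul_of_pos hc]

lemma AccP_jointOf (cond : ℝ → Measure (Inp d)) [∀ y, SFinite (cond y)] (w : Inp d) :
    AccP (jointOf cond) w
      = (2⁻¹ * (cond 1).map (pred w) (Ioi 0) + 2⁻¹ * (cond (-1)).map (pred w) (Iio 0)).toReal := by
  rw [AccP, jointOf, Measure.add_apply, Measure.smul_apply, Measure.smul_apply, smul_eq_mul,
    smul_eq_mul, Measure.prod_dirac, Measure.prod_dirac,
    (measurableEmbedding_prod_mk_right _).map_apply,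
    (measurableEmbedding_prod_mk_right _).map_apply,
    Measure.map_apply (measurable_pred w) measurableSet_Ioi,
    Measure.map_apply (measurable_pred w) measurableSet_Iio]
  simp only [preimage, mem_ofPred_eq, Real.sign_eq_one_iff, Real.sign_eq_neg_one_iff, mem_Ioi,
    mem_Iio]

lemma map_pred_condX2 (μ : Vec d) (σ : ℝ) {γ : ℝ} (hγ : 0 < γ) (η y : ℝ) :
    (condX2 d μ σ γ η y).map (pred (μ, -γ • μ, 0))
      = gaussianReal (y * ((1 + γ) * vnorm μ ^ 2)) (σ ^ 2 * (1 + γ) * vnorm μ ^ 2).toNNReal := by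
  have hnorm : vnorm μ ^ 2 = ∑ i, μ i ^ 2 := sq_sqrt (Finset.sum_nonneg fun i _ => sq_nonneg _)
  rw [condX2, map_pred_prod_gaussVec, hnorm]
  congr 1
  · simp only [pred, dot, Finset.mul_sum, ← Finset.sum_add_distrib]
    refine Finset.sum_congr rfl fun i _ => ?_
    simp only [Pi.smul_apply, smul_eq_mul, Pi.zero_apply]
    ring
  · ext
    push_cast
    rw [Real.coe_toNNReal _ (sq_nonneg σ), Real.coe_toNNReal _ (by positivity),
      Real.coe_toNNReal _ (by positivity), Real.coe_toNNReal _ (by positivity)]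
    simp only [Pi.smul_apply, smul_eq_mul, Pi.zero_apply, zero_pow two_ne_zero, zero_mul,
      Finset.sum_const_zero, add_zero, mul_pow, ← Finset.sum_mul, ← Finset.mul_sum]
    field_simp

end Model

theorem c2_optimal_accuracy_on_c2_general (d : ℕ) (μ : Vec d) (hμ : μ ≠ 0)
    (σ γ η : ℝ) (hσ : 0 < σ) (hγ : 0 < γ) :
    AccP (Pc2 d μ σ γ η)
        ((1 / (vnorm μ * Real.sqrt (1 + γ ^ 2))) • ((μ, -γ • μ, (0 : Vec d)) : Inp d))
      = 0.5 * erfc (-((vnorm μ / (Real.sqrt 2 * σ)) * Real.sqrt (1 + γ))) := by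
  have hν := vnorm_pos hμ
  set V := (σ ^ 2 * (1 + γ) * vnorm μ ^ 2).toNNReal
  have hV : V ≠ 0 := by positivity
  have hsd : √(2 * (V : ℝ)) = √2 * σ * vnorm μ * √(1 + γ) := by
    rw [Real.coe_toNNReal _ (by positivity), show 2 * (σ ^ 2 * (1 + γ) * vnorm μ ^ 2)
      = 2 * (1 + γ) * (σ * vnorm μ) ^ 2 by ring, sqrt_mul (by positivity), sqrt_mul zero_le_two,
      sqrt_sq (by positivity)]
    ring
  rw [AccP_smul_of_pos _ (by positivity), Pc2, AccP_jointOf, map_pred_condX2 _ _ hγ,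
    map_pred_condX2 _ _ hγ, neg_one_mul, gaussianReal_neg_Iio_zero, one_mul, ← add_mul,
    ENNReal.inv_two_add_inv_two, one_mul, toReal_gaussianReal_Ioi_zero _ hV, hsd]
  have harg : (1 + γ) * vnorm μ ^ 2 / (√2 * σ * vnorm μ * √(1 + γ))
      = vnorm μ / (√2 * σ) * √(1 + γ) := by
    have h1γ : √(1 + γ) ^ 2 = 1 + γ := sq_sqrt (by positivity)
    field_simp
    rw [h1γ]
  rw [harg]
  norm_num

theorem c2_optimal_accuracy_on_c2 (d : ℕ) (hd : 1 ≤ d) (μ : Vec d) (hμ : μ ≠ 0)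
    (σ γ η : ℝ) (hσ : 0 < σ) (hγ : 0 < γ) (hη : 0 < η) :
    AccP (Pc2 d μ σ γ η)
        ((1 / (vnorm μ * Real.sqrt (1 + γ ^ 2))) • ((μ, -γ • μ, (0 : Vec d)) : Inp d))
      = 0.5 * erfc (-((vnorm μ / (Real.sqrt 2 * σ)) * Real.sqrt (1 + γ))) :=
  c2_optimal_accuracy_on_c2_general d μ hμ σ γ η hσ hγ
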